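/- Let G be a graph and u a vertex of degree 2 with incident edges e = uv and f = uw. If S is a minimal matching planarizing set of G (i.e., a matching whose contraction yields a planar graph, minimal under inclusion), then S contains neither e nor f. -/

import Mathlib

/-!
Put `S' = S \ {uv}`. As `S` is a matching, the class of `u` in `G/S'` is `{u}` alone, with
neighbours among `[v]` and `[w]`, and `G/S` arises from `G/S'` by merging `[u]` into `[v]`.
Let `K` be `K₅` or `K₃,₃`, both of minimum degree `3`. In a `K`-minor model of `G/S'` the
vertex `[u]` cannot be a whole branch set, as its at most two neighbours meet at most two other
branch sets; so `[u]` has a neighbour `d` inside its own branch set, and sending `[u]` to `d`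
before projecting to `G/S` turns the model into a `K`-minor model of `G/S`. Hence `S'` is
still planarizing, against the minimality of `S`.
-/

open SimpleGraph

namespace Contractibility

variable {V W : Type*}

/-- The setoid on vertices generated by identifying endpoints of edges in `S`. -/
def contractSetoid (S : Set (Sym2 V)) : Setoid V :=
  ⟨Relation.EqvGen (fun a b => s(a, b) ∈ S), Relation.EqvGen.is_equivalence _⟩

/-- The graph obtained from `G` by contracting all edges of `S`
(loops and parallel edges discarded). -/
def contract (G : SimpleGraph V) (S : Set (Sym2 V)) :
    SimpleGraph (Quotient (contractSetoid S)) :=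
  SimpleGraph.fromRel (fun x y => ∃ a b : V, G.Adj a b ∧
    Quotient.mk (contractSetoid S) a = x ∧ Quotient.mk (contractSetoid S) b = y)

/-- `H` is a minor of `G`: branch-set definition. -/
def HasMinor (G : SimpleGraph V) (H : SimpleGraph W) : Prop :=
  ∃ f : W → Set V,
    (∀ w, (f w).Nonempty) ∧
    (∀ w, (G.induce (f w)).Connected) ∧
    (∀ w₁ w₂, w₁ ≠ w₂ → Disjoint (f w₁) (f w₂)) ∧
    (∀ w₁ w₂, H.Adj w₁ w₂ → ∃ u ∈ f w₁, ∃ v ∈ f w₂, G.Adj u v)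

/-- Planarity, via Wagner's theorem: no `K₅` and no `K₃,₃` minor. -/
def Planar (G : SimpleGraph V) : Prop :=
  ¬ HasMinor G (completeGraph (Fin 5)) ∧
  ¬ HasMinor G (completeBipartiteGraph (Fin 3) (Fin 3))

/-- `S` is a matching in `G`: edges of `G`, pairwise non-adjacent. -/
def IsMatching (G : SimpleGraph V) (S : Set (Sym2 V)) : Prop :=
  S ⊆ G.edgeSet ∧ ∀ e ∈ S, ∀ f ∈ S, e ≠ f → ∀ v : V, v ∈ e → v ∉ f

/-- `S` is a matching planarizing set of `G`. -/
def MatchingPlanarizing (G : SimpleGraph V) (S : Set (Sym2 V)) : Prop :=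
  IsMatching G S ∧ Planar (contract G S)

section Minor

variable {U : Type*}

structure IsMinorModel (G : SimpleGraph V) (H : SimpleGraph W) (f : W → Set V) : Prop where
  nonempty : ∀ w, (f w).Nonempty
  connected : ∀ w, (G.induce (f w)).Connected
  disjoint : ∀ w₁ w₂, w₁ ≠ w₂ → Disjoint (f w₁) (f w₂)
  adj : ∀ w₁ w₂, H.Adj w₁ w₂ → ∃ u ∈ f w₁, ∃ v ∈ f w₂, G.Adj u v

theorem hasMinor_iff {G : SimpleGraph V} {H : SimpleGraph W} :
    HasMinor G H ↔ ∃ f, IsMinorModel G H f :=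
  ⟨fun ⟨f, h₁, h₂, h₃, h₄⟩ => ⟨f, ⟨h₁, h₂, h₃, h₄⟩⟩, fun ⟨f, h⟩ => ⟨f, h.1, h.2, h.3, h.4⟩⟩

theorem induce_image_connected {G : SimpleGraph V} {G' : SimpleGraph U} {A : Set V} (φ : V → U)
    (hφ : ∀ x ∈ A, ∀ y ∈ A, G.Adj x y → G'.Adj (φ x) (φ y) ∨ φ x = φ y)
    (hA : (G.induce A).Connected) : (G'.induce (φ '' A)).Connected := by
  obtain ⟨⟨x₀, hx₀⟩⟩ := hA.nonempty
  have : Nonempty (φ '' A) := ⟨⟨φ x₀, x₀, hx₀, rfl⟩⟩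
  refine Connected.mk ?_
  rintro ⟨_, x, hx, rfl⟩ ⟨_, y, hy, rfl⟩
  have hxy := (reachable_iff_reflTransGen _ _).mp (hA.preconnected ⟨x, hx⟩ ⟨y, hy⟩)
  refine (reachable_iff_reflTransGen _ _).mpr
    (hxy.lift' (fun p : A => (⟨φ p, p.1, p.2, rfl⟩ : φ '' A)) ?_)
  rintro ⟨x, hx⟩ ⟨y, hy⟩ h
  rcases hφ x hx y hy h with h | h
  · exact .single h
  · have hxy : (⟨φ x, x, hx, rfl⟩ : φ '' A) = ⟨φ y, y, hy, rfl⟩ := Subtype.ext h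
    rw [Function.onFun, hxy]

namespace IsMinorModel

variable {G : SimpleGraph V} {H : SimpleGraph W} {f : W → Set V}

theorem eq_of_mem (hf : IsMinorModel G H f) {x : V} {w₁ w₂ : W} (h₁ : x ∈ f w₁)
    (h₂ : x ∈ f w₂) : w₁ = w₂ := by
  by_contra h
  exact Set.disjoint_left.mp (hf.disjoint _ _ h) h₁ h₂

theorem ne_singleton (hf : IsMinorModel G H f) {a b c : V}
    (ha : ∀ y, G.Adj a y → y = b ∨ y = c) {w : W} (hw : 3 ≤ (H.neighborSet w).encard) :
    f w ≠ {a} := by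
  intro hfw
  have hsub : H.neighborSet w ⊆ {w' | b ∈ f w'} ∪ {w' | c ∈ f w'} := by
    intro w' hw'
    obtain ⟨x, hx, y, hy, hxy⟩ := hf.adj w w' hw'
    rw [hfw, Set.mem_singleton_iff] at hx
    rw [hx] at hxy
    rcases ha y hxy with rfl | rfl
    · exact Or.inl hy
    · exact Or.inr hy
  have hle : ∀ z, {w' | z ∈ f w'}.encard ≤ 1 := fun z =>
    Set.encard_le_one_iff.mpr fun _ _ h₁ h₂ => hf.eq_of_mem h₁ h₂
  have : (3 : ℕ∞) ≤ 2 := calc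
    3 ≤ (H.neighborSet w).encard := hw
    _ ≤ ({w' | b ∈ f w'} ∪ {w' | c ∈ f w'}).encard := Set.encard_le_encard hsub
    _ ≤ {w' | b ∈ f w'}.encard + {w' | c ∈ f w'}.encard := Set.encard_union_le _ _
    _ ≤ 1 + 1 := add_le_add (hle b) (hle c)
    _ = 2 := one_add_one_eq_two
  norm_num at this

theorem exists_adj_mem (hf : IsMinorModel G H f) {a : V} {w : W} (ha : a ∈ f w)
    (hne : f w ≠ {a}) : ∃ d ∈ f w, G.Adj a d := by
  have : Nontrivial (f w) := ((Set.nontrivial_iff_ne_singleton ha).mpr hne).coe_sort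
  obtain ⟨⟨d, hd⟩, had⟩ := (hf.connected w).preconnected.exists_adj_of_nontrivial ⟨a, ha⟩
  exact ⟨d, hd, had⟩

theorem image (hf : IsMinorModel G H f) {G' : SimpleGraph U} (ρ : V → U)
    (hadj : ∀ w₁ w₂, ∀ x ∈ f w₁, ∀ y ∈ f w₂, G.Adj x y → G'.Adj (ρ x) (ρ y) ∨ ρ x = ρ y)
    (hsep : ∀ w₁ w₂, ∀ x ∈ f w₁, ∀ y ∈ f w₂, ρ x = ρ y → w₁ = w₂) :
    IsMinorModel G' H (fun w => ρ '' f w) where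
  nonempty w := (hf.nonempty w).image ρ
  connected w := induce_image_connected ρ (hadj w w) (hf.connected w)
  disjoint w₁ w₂ h := by
    rw [Set.disjoint_left]
    rintro _ ⟨x, hx, rfl⟩ ⟨y, hy, hxy⟩
    exact h (hsep _ _ y hy x hx hxy).symm
  adj w₁ w₂ h := by
    obtain ⟨x, hx, y, hy, hxy⟩ := hf.adj w₁ w₂ h
    refine ⟨ρ x, ⟨x, hx, rfl⟩, ρ y, ⟨y, hy, rfl⟩, ?_⟩
    exact (hadj _ _ x hx y hy hxy).resolve_right fun e => h.ne (hsep _ _ x hx y hy e)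

end IsMinorModel

/-- Contracting an edge `ab` at a vertex `a` of degree at most two, presented as the map `π`,
preserves minors of minimum degree three. -/
theorem HasMinor.of_merge {G : SimpleGraph V} {G' : SimpleGraph U} {H : SimpleGraph W}
    (hH : ∀ w, 3 ≤ (H.neighborSet w).encard) (π : V → U) {a b c : V}
    (hπ : ∀ x y, G.Adj x y → G'.Adj (π x) (π y) ∨ π x = π y) (hab : π a = π b)
    (hfib : ∀ x y, π x = π y → x = y ∨ x = a ∨ y = a) (ha : ∀ y, G.Adj a y → y = b ∨ y = c)
    (h : HasMinor G H) : HasMinor G' H := by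
  classical
  obtain ⟨f, hf⟩ := hasMinor_iff.mp h
  obtain ⟨d, hd⟩ : ∃ d, ∀ w, a ∈ f w → d ∈ f w ∧ G.Adj a d := by
    by_cases h : ∃ w, a ∈ f w
    · obtain ⟨w, haw⟩ := h
      obtain ⟨d, hdw, had⟩ := hf.exists_adj_mem haw (hf.ne_singleton ha (hH w))
      exact ⟨d, fun w' haw' => hf.eq_of_mem haw haw' ▸ ⟨hdw, had⟩⟩
    · exact ⟨a, fun w haw => (h ⟨w, haw⟩).elim⟩
  have hmerge : ∀ w y, a ∈ f w → G.Adj a y → G'.Adj (π d) (π y) ∨ π d = π y := by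
    intro w y haw hay
    have had := (hd w haw).2
    rcases ha d had with hdb | hdc <;> rcases ha y hay with hyb | hyc
    · exact Or.inr (by rw [hdb, hyb])
    · rw [hdb, ← hab]
      exact hπ a y hay
    · rw [hyb, ← hab]
      exact (hπ a d had).imp Adj.symm Eq.symm
    · exact Or.inr (by rw [hdc, hyc])
  let σ : V → V := fun x => if x = a then d else x
  have hσ_mem : ∀ w x, x ∈ f w → σ x ∈ f w := by
    intro w x hx
    by_cases hxa : x = a
    · simpa only [σ, if_pos hxa] using (hd w (hxa ▸ hx)).1
    · simpa only [σ, if_neg hxa] using hx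
  have hσ_ne : ∀ w x, x ∈ f w → σ x ≠ a := by
    intro w x hx
    by_cases hxa : x = a
    · simpa only [σ, if_pos hxa] using (hd w (hxa ▸ hx)).2.ne.symm
    · simpa only [σ, if_neg hxa] using hxa
  refine hasMinor_iff.mpr ⟨_, hf.image (π ∘ σ) ?_ ?_⟩
  · intro w₁ w₂ x hx y hy hxy
    by_cases hxa : x = a
    · have hya : y ≠ a := fun hya => hxy.ne (hxa.trans hya.symm)
      simp only [Function.comp, σ, if_pos hxa, if_neg hya]
      exact hmerge w₁ y (hxa ▸ hx) (hxa ▸ hxy)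
    · by_cases hya : y = a
      · simp only [Function.comp, σ, if_neg hxa, if_pos hya]
        exact (hmerge w₂ x (hya ▸ hy) (hya ▸ hxy.symm)).imp Adj.symm Eq.symm
      · simp only [Function.comp, σ, if_neg hxa, if_neg hya]
        exact hπ x y hxy
  · intro w₁ w₂ x hx y hy hxy
    rcases hfib _ _ hxy with h | h | h
    · exact hf.eq_of_mem (hσ_mem _ _ hx) (h ▸ hσ_mem _ _ hy)
    · exact absurd h (hσ_ne _ _ hx)
    · exact absurd h (hσ_ne _ _ hy)

theorem three_le_encard_neighborSet_completeGraph (x : Fin 5) :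
    3 ≤ ((completeGraph (Fin 5)).neighborSet x).encard := by
  rw [neighborSet_top, ← Finset.coe_singleton, ← Finset.coe_compl,
    Set.encard_coe_eq_coe_finsetCard, Finset.card_compl]
  norm_num

theorem three_le_encard_neighborSet_completeBipartiteGraph (x : Fin 3 ⊕ Fin 3) :
    3 ≤ ((completeBipartiteGraph (Fin 3) (Fin 3)).neighborSet x).encard := by
  rcases x with i | i
  · have : Set.range Sum.inr ⊆ (completeBipartiteGraph (Fin 3) (Fin 3)).neighborSet (.inl i) := by
      rintro _ ⟨j, rfl⟩
      simp
    exact le_trans (by simp) (Sum.inr_injective.encard_range.trans (Set.encard_le_encard this))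
  · have : Set.range Sum.inl ⊆ (completeBipartiteGraph (Fin 3) (Fin 3)).neighborSet (.inr i) := by
      rintro _ ⟨j, rfl⟩
      simp
    exact le_trans (by simp) (Sum.inl_injective.encard_range.trans (Set.encard_le_encard this))

end Minor

section Contraction

variable {G : SimpleGraph V} {S T : Set (Sym2 V)}

theorem contract_adj_iff {x y : Quotient (contractSetoid S)} :
    (contract G S).Adj x y ↔
      x ≠ y ∧ ∃ a b, G.Adj a b ∧ Quotient.mk _ a = x ∧ Quotient.mk _ b = y := by
  rw [contract, fromRel_adj]
  constructor
  · rintro ⟨hne, h | ⟨a, b, hab, ha, hb⟩⟩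
    · exact ⟨hne, h⟩
    · exact ⟨hne, b, a, hab.symm, hb, ha⟩
  · rintro ⟨hne, h⟩
    exact ⟨hne, Or.inl h⟩

theorem contractSetoid_mono (h : T ⊆ S) : contractSetoid T ≤ contractSetoid S :=
  fun _ _ hr => hr.mono fun _ _ he => h he

theorem contract_adj_or_eq_of_subset (h : T ⊆ S) {x y : Quotient (contractSetoid T)}
    (hxy : (contract G T).Adj x y) :
    (contract G S).Adj (Setoid.map_of_le (contractSetoid_mono h) x)
        (Setoid.map_of_le (contractSetoid_mono h) y) ∨
      Setoid.map_of_le (contractSetoid_mono h) x = Setoid.map_of_le (contractSetoid_mono h) y := by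
  obtain ⟨-, a, b, hab, rfl, rfl⟩ := contract_adj_iff.mp hxy
  exact or_iff_not_imp_right.mpr fun hne => contract_adj_iff.mpr ⟨hne, a, b, hab, rfl, rfl⟩

namespace IsMatching

theorem mono (hM : IsMatching G S) (h : T ⊆ S) : IsMatching G T :=
  ⟨h.trans hM.1, fun e he e' he' => hM.2 e (h he) e' (h he')⟩

theorem eq_of_mem (hM : IsMatching G S) {e e' : Sym2 V} (he : e ∈ S) (he' : e' ∈ S) {x : V}
    (hx : x ∈ e) (hx' : x ∈ e') : e = e' := by
  by_contra h
  exact hM.2 e he e' he' h x hx hx'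

theorem mk_eq_mk_iff (hM : IsMatching G S) {a b : V} :
    Quotient.mk (contractSetoid S) a = Quotient.mk _ b ↔ a = b ∨ s(a, b) ∈ S := by
  rw [Quotient.eq]
  constructor
  · intro h
    induction h with
    | rel x y h => exact Or.inr h
    | refl x => exact Or.inl rfl
    | symm x y _ ih => exact ih.imp Eq.symm fun h => Sym2.eq_swap ▸ h
    | trans x y z _ _ ih₁ ih₂ =>
      rcases ih₁ with rfl | h₁
      · exact ih₂
      rcases ih₂ with rfl | h₂
      · exact Or.inr h₁
      left
      rcases Sym2.eq_iff.mp (hM.eq_of_mem h₁ h₂ (Sym2.mem_mk_right x y) (Sym2.mem_mk_left y z))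
        with ⟨rfl, rfl⟩ | ⟨rfl, -⟩ <;> rfl
  · rintro (rfl | h)
    · exact Relation.EqvGen.refl a
    · exact Relation.EqvGen.rel a b h

end IsMatching

theorem hasMinor_contract_of_hasMinor_contract_diff {H : SimpleGraph W}
    (hH : ∀ w, 3 ≤ (H.neighborSet w).encard) {u v w : V} (hM : IsMatching G S)
    (he : s(u, v) ∈ S) (hu : G.neighborSet u ⊆ {v, w})
    (h : HasMinor (contract G (S \ {s(u, v)})) H) : HasMinor (contract G S) H := by
  have hT : S \ {s(u, v)} ⊆ S := Set.sdiff_subset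
  have hMT := hM.mono hT
  let mk' := Quotient.mk (contractSetoid (S \ {s(u, v)}))
  have hu_class : ∀ x, mk' x = mk' u → x = u := fun x hx =>
    (hMT.mk_eq_mk_iff.mp hx).resolve_right fun hxu =>
      hxu.2 (hM.eq_of_mem hxu.1 he (Sym2.mem_mk_right x u) (Sym2.mem_mk_left u v))
  refine HasMinor.of_merge hH (Setoid.map_of_le (contractSetoid_mono hT))
    (a := mk' u) (b := mk' v) (c := mk' w)
    (fun _ _ => contract_adj_or_eq_of_subset hT) ?_ ?_ ?_ h
  · exact Quotient.sound (Relation.EqvGen.rel u v he)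
  · rintro ⟨x⟩ ⟨y⟩ hxy
    rcases hM.mk_eq_mk_iff.mp hxy with rfl | hxyS
    · exact Or.inl rfl
    by_cases hxy' : s(x, y) = s(u, v)
    · right
      rcases Sym2.mem_iff.mp (hxy' ▸ Sym2.mem_mk_left u v : u ∈ s(x, y)) with rfl | rfl
      · exact Or.inl rfl
      · exact Or.inr rfl
    · exact Or.inl (hMT.mk_eq_mk_iff.mpr (Or.inr ⟨hxyS, hxy'⟩))
  · intro Y hY
    obtain ⟨-, x, y, hxy, hx, rfl⟩ := contract_adj_iff.mp hY
    rw [hu_class x hx] at hxy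
    rcases hu hxy with rfl | rfl
    · exact Or.inl rfl
    · exact Or.inr rfl

theorem MatchingPlanarizing.diff_singleton {u v w : V} (hS : MatchingPlanarizing G S)
    (he : s(u, v) ∈ S) (hu : G.neighborSet u ⊆ {v, w}) :
    MatchingPlanarizing G (S \ {s(u, v)}) :=
  ⟨hS.1.mono Set.sdiff_subset,
    fun h => hS.2.1 (hasMinor_contract_of_hasMinor_contract_diff
      three_le_encard_neighborSet_completeGraph hS.1 he hu h),
    fun h => hS.2.2 (hasMinor_contract_of_hasMinor_contract_diff
      three_le_encard_neighborSet_completeBipartiteGraph hS.1 he hu h)⟩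

end Contraction

theorem stmt0_general {V : Type*} (G : SimpleGraph V) (u v w : V)
    (hnb : G.neighborSet u = {v, w})
    (S : Set (Sym2 V))
    (hS : MatchingPlanarizing G S)
    (hmin : ∀ S' ⊂ S, ¬ MatchingPlanarizing G S') :
    s(u, v) ∉ S ∧ s(u, w) ∉ S :=
  ⟨fun he => hmin _ (Set.sdiff_singleton_ssubset.mpr he) (hS.diff_singleton he hnb.subset),
    fun hf => hmin _ (Set.sdiff_singleton_ssubset.mpr hf)
      (hS.diff_singleton hf (hnb.trans (Set.pair_comm v w)).subset)⟩

/-- A minimal matching planarizing set contains no edge incident to a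
degree-2 vertex `u` with neighbors `v`, `w`. -/
theorem stmt0 {V : Type*} (G : SimpleGraph V) (u v w : V) (hvw : v ≠ w)
    (hnb : G.neighborSet u = {v, w})
    (S : Set (Sym2 V))
    (hS : MatchingPlanarizing G S)
    (hmin : ∀ S' ⊂ S, ¬ MatchingPlanarizing G S') :
    s(u, v) ∉ S ∧ s(u, w) ∉ S :=
  stmt0_general G u v w hnb S hS hmin

end Contractibility
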